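/- arXiv:1508.05685 — 3 statements merged into one kernel-verified Lean document; each statement's English description precedes it below -/
import Mathlib

section
/- For any associative unital algebra Λ over ℂ, the commutative-degree filtration piece F^d Λ (defined below) is a two-sided ideal of Λ, and the filtration is multiplicative: F^a Λ · F^b Λ ⊆ F^{a+b} Λ for all a, b ≥ 0. -/
/-- The set of iterated Lie commutators `[x₁,[x₂,…,[x_{k−1},x_k]…]]` of length `k`
in an associative algebra (with `[a,b] = ab − ba`).  For `k = 1` this is all of `Λ`. -/
def ncCommSet (Λ : Type*) [Ring Λ] : ℕ → Set Λ
  | 0 => {0}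
  | 1 => Set.univ
  | (k + 2) => {x | ∃ a y : Λ, y ∈ ncCommSet Λ (k + 1) ∧ x = a * y - y * a}

/-- `Λ_k^{Lie}`: the ℂ-linear span of iterated commutators of length `k`. -/
def ncLieSpan (Λ : Type*) [Ring Λ] [Algebra ℂ Λ] (k : ℕ) : Submodule ℂ Λ :=
  Submodule.span ℂ (ncCommSet Λ k)

/-- For a list `[i₁, …, i_m]`, the product `Λ·Λ_{i₁}^{Lie}·Λ·⋯·Λ·Λ_{i_m}^{Lie}·Λ`
(with `Λ = ⊤` interspersed). -/
def ncChain (Λ : Type*) [Ring Λ] [Algebra ℂ Λ] : List ℕ → Submodule ℂ Λ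
  | [] => ⊤
  | (k :: l) => ⊤ * (ncLieSpan Λ k * ncChain Λ l)

/-- The NC filtration
`F^d Λ = Σ_{m≥0} Σ_{i₁+⋯+i_m = m+d} Λ·Λ_{i₁}^{Lie}·Λ·⋯·Λ_{i_m}^{Lie}·Λ`. -/
def ncF (Λ : Type*) [Ring Λ] [Algebra ℂ Λ] (d : ℕ) : Submodule ℂ Λ :=
  ⨆ (l : List ℕ) (_ : l.sum = l.length + d), ncChain Λ l

lemma ncTop_mul_top (Λ : Type*) [Ring Λ] [Algebra ℂ Λ] :
    (⊤ : Submodule ℂ Λ) * ⊤ = ⊤ :=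
  le_antisymm le_top fun x _ =>
    mul_one x ▸ Submodule.mul_mem_mul Submodule.mem_top Submodule.mem_top

lemma top_mul_ncChain (Λ : Type*) [Ring Λ] [Algebra ℂ Λ] (l : List ℕ) :
    (⊤ : Submodule ℂ Λ) * ncChain Λ l = ncChain Λ l := by
  cases l with
  | nil => rw [ncChain]; exact ncTop_mul_top Λ
  | cons k l => rw [ncChain, ← mul_assoc, ncTop_mul_top Λ]

lemma ncChain_mul_top (Λ : Type*) [Ring Λ] [Algebra ℂ Λ] (l : List ℕ) :
    ncChain Λ l * (⊤ : Submodule ℂ Λ) = ncChain Λ l := by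
  induction l with
  | nil => rw [ncChain]; exact ncTop_mul_top Λ
  | cons k l ih => rw [ncChain, mul_assoc, mul_assoc, ih]

lemma ncChain_mul_ncChain (Λ : Type*) [Ring Λ] [Algebra ℂ Λ] (l l' : List ℕ) :
    ncChain Λ l * ncChain Λ l' = ncChain Λ (l ++ l') := by
  induction l with
  | nil => simpa [ncChain] using top_mul_ncChain Λ l'
  | cons k l ih => rw [List.cons_append, ncChain, ncChain, mul_assoc, mul_assoc, ih]

lemma ncChain_le_ncF (Λ : Type*) [Ring Λ] [Algebra ℂ Λ] {l : List ℕ} {d : ℕ}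
    (h : l.sum = l.length + d) : ncChain Λ l ≤ ncF Λ d := by
  exact le_iSup_of_le l (le_iSup_of_le h le_rfl)

lemma top_mul_ncF (Λ : Type*) [Ring Λ] [Algebra ℂ Λ] (d : ℕ) :
    (⊤ : Submodule ℂ Λ) * ncF Λ d ≤ ncF Λ d := by
  rw [ncF, Submodule.mul_iSup]
  refine iSup_le fun l => ?_
  rw [Submodule.mul_iSup]
  refine iSup_le fun h => ?_
  rw [top_mul_ncChain]
  exact ncChain_le_ncF Λ h

lemma ncF_mul_top (Λ : Type*) [Ring Λ] [Algebra ℂ Λ] (d : ℕ) :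
    ncF Λ d * (⊤ : Submodule ℂ Λ) ≤ ncF Λ d := by
  rw [ncF, Submodule.iSup_mul]
  refine iSup_le fun l => ?_
  rw [Submodule.iSup_mul]
  refine iSup_le fun h => ?_
  rw [ncChain_mul_top]
  exact ncChain_le_ncF Λ h

/-- each `F^d Λ` is a two-sided ideal of `Λ`, and the NC filtration is
multiplicative: `F^a Λ · F^b Λ ⊆ F^{a+b} Λ`. -/
theorem ncF_twoSidedIdeal_and_mul (Λ : Type*) [Ring Λ] [Algebra ℂ Λ] :
    (∀ d : ℕ, ∀ x ∈ ncF Λ d, ∀ a : Λ, a * x ∈ ncF Λ d ∧ x * a ∈ ncF Λ d) ∧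
    (∀ a b : ℕ, ncF Λ a * ncF Λ b ≤ ncF Λ (a + b)) := by
  constructor
  · intro d x hx a
    exact ⟨top_mul_ncF Λ d (Submodule.mul_mem_mul Submodule.mem_top hx),
      ncF_mul_top Λ d (Submodule.mul_mem_mul hx Submodule.mem_top)⟩
  · intro a b
    simp only [ncF]
    rw [Submodule.iSup_mul]
    refine iSup_le fun l => ?_
    rw [Submodule.iSup_mul]
    refine iSup_le fun hl => ?_
    rw [Submodule.mul_iSup]
    refine iSup_le fun l' => ?_
    rw [Submodule.mul_iSup]
    refine iSup_le fun hl' => ?_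
    rw [ncChain_mul_ncChain]
    exact ncChain_le_ncF Λ (by simp [hl, hl']; ring)
end

section
/- Let Λ be an associative unital ℂ-algebra and φ : Λ → Λ an algebra homomorphism such that the induced map on the abelianization Λ^{ab} = Λ/F^1Λ is the identity. Then for every d ≥ 0 and every x ∈ F^dΛ, one has φ(x) − x ∈ F^{d+1}Λ; in particular the induced map on gr_F(Λ) is the identity and each induced map φ^{≤d} : Λ/F^{d+1}Λ → Λ/F^{d+1}Λ is an isomorphism. -/
set_option linter.unusedSectionVars false
set_option maxHeartbeats 1000000


namespace NcFProofAux

variable {Λ : Type*} [Ring Λ] [Algebra ℂ Λ]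

lemma ncChain_nil : ncChain Λ [] = ⊤ := rfl
lemma ncChain_cons (k : ℕ) (l : List ℕ) :
    ncChain Λ (k :: l) = ⊤ * (ncLieSpan Λ k * ncChain Λ l) := rfl
lemma ncCommSet_two (k : ℕ) :
    ncCommSet Λ (k+2) = {x | ∃ a y : Λ, y ∈ ncCommSet Λ (k + 1) ∧ x = a * y - y * a} := rfl
lemma ncF_eq (d : ℕ) : ncF Λ d = ⨆ (l : List ℕ) (_ : l.sum = l.length + d), ncChain Λ l := rfl

lemma lieSpan_zero : ncLieSpan Λ 0 = ⊥ := by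
  simp [ncLieSpan, ncCommSet]

lemma mem_lieSpan_one (x : Λ) : x ∈ ncLieSpan Λ 1 :=
  Submodule.subset_span (by simp [ncCommSet])

lemma top_mul_chain {l : List ℕ} (a : Λ) {x : Λ} (hx : x ∈ ncChain Λ l) :
    a * x ∈ ncChain Λ l := by
  cases l with
  | nil => exact Submodule.mem_top
  | cons k l =>
      rw [ncChain_cons] at hx ⊢
      refine Submodule.mul_induction_on hx (fun m _ n hn => ?_) (fun y z hy hz => ?_)
      · rw [← mul_assoc a m n]; exact Submodule.mul_mem_mul Submodule.mem_top hn
      · rw [mul_add]; exact add_mem hy hz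

lemma chain_mul : ∀ (l l' : List ℕ) {x y : Λ}, x ∈ ncChain Λ l → y ∈ ncChain Λ l' →
    x * y ∈ ncChain Λ (l ++ l')
  | [], l', x, y, hx, hy => by simpa using top_mul_chain x hy
  | (k :: l), l', x, y, hx, hy => by
      rw [List.cons_append, ncChain_cons]
      rw [ncChain_cons] at hx
      refine Submodule.mul_induction_on hx (fun m hm n hn => ?_) (fun z w hz hw => ?_)
      · refine Submodule.mul_induction_on hn (fun u hu v hv => ?_) (fun z w hz hw => ?_)
        · have : m * (u * v) * y = m * (u * (v * y)) := by noncomm_ring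
          rw [this]
          exact Submodule.mul_mem_mul Submodule.mem_top
            (Submodule.mul_mem_mul hu (chain_mul l l' hv hy))
        · rw [mul_add, add_mul]; exact add_mem hz hw
      · rw [add_mul]; exact add_mem hz hw

lemma chain_le_ncF {l : List ℕ} {e : ℕ} (h : l.sum = l.length + e) :
    ncChain Λ l ≤ ncF Λ e := by
  rw [ncF_eq]; exact le_iSup₂ (f := fun (l : List ℕ) (_ : l.sum = l.length + e) => ncChain Λ l) l h

lemma mem_ncF_zero (x : Λ) : x ∈ ncF Λ 0 :=
  chain_le_ncF (l := []) (by simp) Submodule.mem_top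

lemma lieSpan_le_ncF (k : ℕ) : ncLieSpan Λ (k + 1) ≤ ncF Λ k := by
  intro x hx
  have h2 : (1:Λ) * (x * 1) ∈ ncChain Λ [k+1] :=
    Submodule.mul_mem_mul Submodule.mem_top (Submodule.mul_mem_mul hx Submodule.mem_top)
  simpa using chain_le_ncF (l := [k+1]) (by simp [Nat.add_comm]) h2

lemma ncF_mul {a b : ℕ} {x y : Λ} (hx : x ∈ ncF Λ a) (hy : y ∈ ncF Λ b) :
    x * y ∈ ncF Λ (a + b) := by
  revert hx
  suffices h : ncF Λ a ≤ Submodule.comap (LinearMap.mulRight ℂ y) (ncF Λ (a+b)) from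
    fun hx => h hx
  rw [ncF_eq]
  refine iSup₂_le fun l hl x hx => ?_
  simp only [Submodule.mem_comap, LinearMap.mulRight_apply]
  revert hy
  suffices h2 : ncF Λ b ≤ Submodule.comap (LinearMap.mulLeft ℂ x) (ncF Λ (a+b)) from
    fun hy => h2 hy
  rw [ncF_eq]
  refine iSup₂_le fun l' hl' y' hy' => ?_
  simp only [Submodule.mem_comap, LinearMap.mulLeft_apply]
  refine chain_le_ncF (l := l ++ l') ?_ (chain_mul l l' hx hy')
  simp only [List.sum_append, List.length_append, hl, hl']
  omega

lemma comm_mem_succ {n : ℕ} (a : Λ) {z : Λ} (hz : z ∈ ncCommSet Λ (n+1)) :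
    a * z - z * a ∈ ncCommSet Λ (n+2) := by
  rw [ncCommSet_two]; exact ⟨a, z, hz, rfl⟩

lemma ad_lieSpan {n : ℕ} (a : Λ) {z : Λ} (hz : z ∈ ncLieSpan Λ (n+1)) :
    a * z - z * a ∈ ncLieSpan Λ (n+2) := by
  induction hz using Submodule.span_induction with
  | mem x h => exact Submodule.subset_span (comm_mem_succ a h)
  | zero => simpa using zero_mem _
  | add x y _ _ hx hy => convert add_mem hx hy using 1; noncomm_ring
  | smul c x _ hx =>
      convert Submodule.smul_mem _ c hx using 1
      simp [smul_sub, mul_smul_comm, smul_mul_assoc]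

lemma bracket_span_span {s t : Set Λ} {p : Submodule ℂ Λ}
    (h : ∀ x ∈ s, ∀ y ∈ t, x * y - y * x ∈ p) :
    ∀ x ∈ Submodule.span ℂ s, ∀ y ∈ Submodule.span ℂ t, x * y - y * x ∈ p := by
  intro x hx
  induction hx using Submodule.span_induction with
  | mem a ha =>
      intro y hy
      induction hy using Submodule.span_induction with
      | mem b hb => exact h a ha b hb
      | zero => simpa using zero_mem p
      | add y z _ _ h1 h2 => convert add_mem h1 h2 using 1; noncomm_ring
      | smul c y _ h1 =>
          convert Submodule.smul_mem p c h1 using 1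
          simp [smul_sub, mul_smul_comm, smul_mul_assoc]
  | zero => intro y hy; simpa using zero_mem p
  | add x z _ _ h1 h2 =>
      intro y hy; convert add_mem (h1 y hy) (h2 y hy) using 1; noncomm_ring
  | smul c x _ h1 =>
      intro y hy
      convert Submodule.smul_mem p c (h1 y hy) using 1
      simp [smul_sub, mul_smul_comm, smul_mul_assoc]

lemma jacobi_comm (i : ℕ) : ∀ {j : ℕ} {x y : Λ}, x ∈ ncCommSet Λ (i+1) →
    y ∈ ncCommSet Λ (j+1) → x * y - y * x ∈ ncLieSpan Λ (i + j + 2) := by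
  induction i with
  | zero =>
      intro j x y _ hy
      rw [Nat.zero_add]
      exact Submodule.subset_span (comm_mem_succ x hy)
  | succ m ih =>
      intro j x y hx hy
      rw [ncCommSet_two] at hx
      obtain ⟨a, u, hu, rfl⟩ := hx
      have h1 : u * y - y * u ∈ ncLieSpan Λ (m + j + 2) := ih hu hy
      have h2 : a * (u*y - y*u) - (u*y - y*u) * a ∈ ncLieSpan Λ (m + j + 3) := by
        exact ad_lieSpan a h1
      have h3 : a * y - y * a ∈ ncCommSet Λ (j+2) := comm_mem_succ a hy
      have h4 : u * (a*y - y*a) - (a*y - y*a) * u ∈ ncLieSpan Λ (m + j + 3) := by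
        exact ih (j := j+1) hu h3
      have key : (a*u - u*a) * y - y * (a*u - u*a)
          = (a * (u*y - y*u) - (u*y - y*u) * a) - (u * (a*y - y*a) - (a*y - y*a) * u) := by
        noncomm_ring
      rw [key]
      have := sub_mem h2 h4
      convert this using 2
      omega

lemma jacobi {i j : ℕ} {x y : Λ} (hx : x ∈ ncLieSpan Λ (i+1)) (hy : y ∈ ncLieSpan Λ (j+1)) :
    x * y - y * x ∈ ncLieSpan Λ (i + j + 2) :=
  bracket_span_span (fun x' hx' y' hy' => jacobi_comm i hx' hy') x hx y hy

lemma chain_bot : ∀ (l : List ℕ), l.sum < l.length → ncChain Λ l = ⊥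
  | [], h => by simp at h
  | (k :: l), h => by
      rw [ncChain_cons]
      cases k with
      | zero => rw [lieSpan_zero]; simp
      | succ k' =>
          have hl : l.sum < l.length := by
            simp only [List.sum_cons, List.length_cons] at h; omega
          rw [chain_bot l hl]
          simp

lemma ad_chain (K : ℕ) (l : List ℕ) : ∀ {e : ℕ}, l.sum = l.length + e →
    ∀ {x : Λ}, x ∈ ncLieSpan Λ (K+1) → ∀ {y : Λ}, y ∈ ncChain Λ l →
    x * y - y * x ∈ ncF Λ (e + K + 1) := by
  induction l with
  | nil =>
      intro e he x hx y hy
      have he0 : e = 0 := by simpa using he.symm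
      subst he0
      have h := jacobi (i := K) (j := 0) hx (mem_lieSpan_one y)
      have h2 : x * y - y * x ∈ ncLieSpan Λ ((K+1) + 1) := by
        convert h using 2 <;> omega
      have h3 := lieSpan_le_ncF (K+1) h2
      convert h3 using 2 <;> omega
  | cons k l' ih =>
      intro e he x hx y hy
      simp only [List.sum_cons, List.length_cons] at he
      cases k with
      | zero =>
          have hbot : ncChain Λ (0 :: l') = ⊥ := by
            rw [ncChain_cons, lieSpan_zero]; simp
          rw [hbot, Submodule.mem_bot] at hy
          subst hy
          simpa using zero_mem _
      | succ k' =>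
          by_cases hc : l'.sum < l'.length
          · have hbot : ncChain Λ ((k'+1) :: l') = ⊥ := by
              rw [ncChain_cons, chain_bot l' hc]; simp
            rw [hbot, Submodule.mem_bot] at hy
            subst hy
            simpa using zero_mem _
          · push_neg at hc
            obtain ⟨e', he'⟩ : ∃ e', l'.sum = l'.length + e' := ⟨l'.sum - l'.length, by omega⟩
            have hee : e = k' + e' := by omega
            rw [ncChain_cons] at hy
            refine Submodule.mul_induction_on hy (fun m hm n hn => ?_) (fun z w hz hw => ?_)
            · refine Submodule.mul_induction_on hn (fun u hu v hv => ?_) (fun z w hz hw => ?_)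
              · -- t1
                have huv : (1:Λ) * (u * v) ∈ ncChain Λ ((k'+1) :: l') :=
                  Submodule.mul_mem_mul Submodule.mem_top (Submodule.mul_mem_mul hu hv)
                rw [one_mul] at huv
                have huvF : u * v ∈ ncF Λ e :=
                  chain_le_ncF (by simp only [List.sum_cons, List.length_cons]; omega) huv
                have hxm : x * m - m * x ∈ ncLieSpan Λ (K + 0 + 2) :=
                  jacobi (i := K) (j := 0) hx (mem_lieSpan_one m)
                have hxm' : x * m - m * x ∈ ncF Λ (K + 1) := by
                  refine lieSpan_le_ncF (K+1) ?_
                  convert hxm using 2 <;> omega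
                have t1 : (x * m - m * x) * (u * v) ∈ ncF Λ (e + K + 1) := by
                  have := ncF_mul hxm' huvF
                  convert this using 2 <;> omega
                -- t2
                have hxu : x * u - u * x ∈ ncLieSpan Λ (K + k' + 2) := jacobi (i := K) (j := k') hx hu
                have hxu' : x * u - u * x ∈ ncF Λ (K + k' + 1) := lieSpan_le_ncF _ hxu
                have hvF : v ∈ ncF Λ e' := chain_le_ncF he' hv
                have t2 : m * ((x * u - u * x) * v) ∈ ncF Λ (e + K + 1) := by
                  have := ncF_mul (mem_ncF_zero m) (ncF_mul hxu' hvF)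
                  convert this using 2 <;> omega
                -- t3
                have hmu : m * (u * 1) ∈ ncChain Λ [k'+1] :=
                  Submodule.mul_mem_mul hm (Submodule.mul_mem_mul hu Submodule.mem_top)
                rw [mul_one] at hmu
                have hmu' : m * u ∈ ncF Λ k' :=
                  chain_le_ncF (by simp [Nat.add_comm]) hmu
                have hxv : x * v - v * x ∈ ncF Λ (e' + K + 1) := ih he' hx hv
                have t3 : (m * u) * (x * v - v * x) ∈ ncF Λ (e + K + 1) := by
                  have := ncF_mul hmu' hxv
                  convert this using 2 <;> omega
                have key : x * (m * (u * v)) - (m * (u * v)) * x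
                    = (x * m - m * x) * (u * v) + m * ((x * u - u * x) * v)
                      + (m * u) * (x * v - v * x) := by noncomm_ring
                rw [key]
                exact add_mem (add_mem t1 t2) t3
              · have h1 : x * (m * z) - (m * z) * x + (x * (m * w) - (m * w) * x)
                    = x * (m * (z + w)) - (m * (z + w)) * x := by noncomm_ring
                rw [← h1]
                exact add_mem hz hw
            · have h1 : x * z - z * x + (x * w - w * x) = x * (z + w) - (z + w) * x := by
                noncomm_ring
              rw [← h1]
              exact add_mem hz hw

lemma ad_ncF {K q : ℕ} {x y : Λ} (hx : x ∈ ncLieSpan Λ (K+1)) (hy : y ∈ ncF Λ q) :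
    x * y - y * x ∈ ncF Λ (q + K + 1) := by
  revert hy
  suffices h : ncF Λ q ≤ Submodule.comap (LinearMap.mulLeft ℂ x - LinearMap.mulRight ℂ x)
      (ncF Λ (q + K + 1)) from fun hy => by simpa using h hy
  rw [ncF_eq]
  refine iSup₂_le fun l hl z hz => ?_
  simp only [Submodule.mem_comap, LinearMap.sub_apply, LinearMap.mulLeft_apply,
    LinearMap.mulRight_apply]
  exact ad_chain K l hl hx hz

variable (φ : Λ →ₐ[ℂ] Λ)

lemma phi_comm : ∀ (k : ℕ) {y : Λ}, y ∈ ncCommSet Λ k → φ y ∈ ncCommSet Λ k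
  | 0, y, hy => by
      simp only [ncCommSet, Set.mem_singleton_iff] at hy ⊢
      simp [hy]
  | 1, y, hy => Set.mem_univ _
  | (k+2), y, hy => by
      rw [ncCommSet_two] at hy ⊢
      obtain ⟨a, u, hu, rfl⟩ := hy
      exact ⟨φ a, φ u, phi_comm (k+1) hu, by simp⟩

lemma phi_lie (k : ℕ) {y : Λ} (hy : y ∈ ncLieSpan Λ k) : φ y ∈ ncLieSpan Λ k := by
  induction hy using Submodule.span_induction with
  | mem x h => exact Submodule.subset_span (phi_comm φ k h)
  | zero => simp
  | add x y _ _ hx hy => rw [map_add]; exact add_mem hx hy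
  | smul c x _ hx => rw [map_smul]; exact Submodule.smul_mem _ c hx

lemma phi_chain : ∀ (l : List ℕ) {y : Λ}, y ∈ ncChain Λ l → φ y ∈ ncChain Λ l
  | [], y, hy => Submodule.mem_top
  | (k :: l), y, hy => by
      rw [ncChain_cons] at hy ⊢
      refine Submodule.mul_induction_on hy (fun m hm n hn => ?_) (fun z w hz hw => ?_)
      · refine Submodule.mul_induction_on hn (fun u hu v hv => ?_) (fun z w hz hw => ?_)
        · rw [map_mul, map_mul]
          exact Submodule.mul_mem_mul Submodule.mem_top
            (Submodule.mul_mem_mul (phi_lie φ k hu) (phi_chain l hv))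
        · rw [mul_add, map_add]; exact add_mem hz hw
      · rw [map_add]; exact add_mem hz hw

lemma phi_ncF (d : ℕ) {y : Λ} (hy : y ∈ ncF Λ d) : φ y ∈ ncF Λ d := by
  revert hy
  suffices h : ncF Λ d ≤ Submodule.comap φ.toLinearMap (ncF Λ d) from fun hy => h hy
  conv_lhs => rw [ncF_eq]
  refine iSup₂_le fun l hl z hz => ?_
  simp only [Submodule.mem_comap, AlgHom.toLinearMap_apply]
  exact chain_le_ncF hl (phi_chain φ l hz)

lemma delta_comm (hφ : ∀ x : Λ, φ x - x ∈ ncF Λ 1) : ∀ (k : ℕ) {y : Λ}, y ∈ ncCommSet Λ (k+1) → φ y - y ∈ ncF Λ (k+1)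
  | 0, y, _ => hφ y
  | (k+1), y, hy => by
      rw [ncCommSet_two] at hy
      obtain ⟨a, u, hu, rfl⟩ := hy
      have hdu : φ u - u ∈ ncF Λ (k+1) := delta_comm hφ k hu
      have hda : φ a - a ∈ ncF Λ 1 := hφ a
      have hu' : u ∈ ncLieSpan Λ (k+1) := Submodule.subset_span hu
      have t1 : u * (φ a - a) - (φ a - a) * u ∈ ncF Λ (1 + k + 1) :=
        ad_ncF (K := k) (q := 1) hu' hda
      have t1' : (φ a - a) * u - u * (φ a - a) ∈ ncF Λ (k + 2) := by
        have := neg_mem t1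
        rw [neg_sub] at this
        convert this using 2 <;> omega
      have t2 : (φ a - a) * (φ u - u) ∈ ncF Λ (k + 2) := by
        have := ncF_mul hda hdu
        convert this using 2 <;> omega
      have t2' : (φ u - u) * (φ a - a) ∈ ncF Λ (k + 2) := by
        have := ncF_mul hdu hda
        convert this using 2 <;> omega
      have t3 : a * (φ u - u) - (φ u - u) * a ∈ ncF Λ (k + 2) := by
        have := ad_ncF (K := 0) (q := k+1) (mem_lieSpan_one a) hdu
        convert this using 2 <;> omega
      have key : φ (a * u - u * a) - (a * u - u * a)
          = ((φ a - a) * u - u * (φ a - a)) + ((φ a - a) * (φ u - u) - (φ u - u) * (φ a - a))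
            + (a * (φ u - u) - (φ u - u) * a) := by
        rw [map_sub, map_mul, map_mul]
        noncomm_ring
      rw [key]
      exact add_mem (add_mem t1' (sub_mem t2 t2')) t3

lemma delta_lie (hφ : ∀ x : Λ, φ x - x ∈ ncF Λ 1) (k : ℕ) {y : Λ} (hy : y ∈ ncLieSpan Λ (k+1)) : φ y - y ∈ ncF Λ (k+1) := by
  induction hy using Submodule.span_induction with
  | mem x h => exact delta_comm φ hφ k h
  | zero => simp
  | add x y _ _ hx hy =>
      have : φ (x + y) - (x + y) = (φ x - x) + (φ y - y) := by rw [map_add]; noncomm_ring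
      rw [this]; exact add_mem hx hy
  | smul c x _ hx =>
      have : φ (c • x) - c • x = c • (φ x - x) := by rw [map_smul, smul_sub]
      rw [this]; exact Submodule.smul_mem _ c hx

lemma part1_chain (hφ : ∀ x : Λ, φ x - x ∈ ncF Λ 1) (l : List ℕ) :
    ∀ {e : ℕ}, l.sum = l.length + e → ∀ {x : Λ}, x ∈ ncChain Λ l →
    φ x - x ∈ ncF Λ (e + 1) := by
  induction l with
  | nil =>
      intro e he x hx
      have he0 : e = 0 := by simpa using he.symm
      subst he0
      exact hφ x
  | cons k l' ih =>
      intro e he x hx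
      simp only [List.sum_cons, List.length_cons] at he
      cases k with
      | zero =>
          have hbot : ncChain Λ (0 :: l') = ⊥ := by
            rw [ncChain_cons, lieSpan_zero]; simp
          rw [hbot, Submodule.mem_bot] at hx
          subst hx
          simpa using zero_mem _
      | succ k' =>
          by_cases hc : l'.sum < l'.length
          · have hbot : ncChain Λ ((k'+1) :: l') = ⊥ := by
              rw [ncChain_cons, chain_bot l' hc]; simp
            rw [hbot, Submodule.mem_bot] at hx
            subst hx
            simpa using zero_mem _
          · push_neg at hc
            obtain ⟨e', he'⟩ : ∃ e', l'.sum = l'.length + e' := ⟨l'.sum - l'.length, by omega⟩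
            have hee : e = k' + e' := by omega
            rw [ncChain_cons] at hx
            refine Submodule.mul_induction_on hx (fun m hm n hn => ?_) (fun z w hz hw => ?_)
            · refine Submodule.mul_induction_on hn (fun u hu v hv => ?_) (fun z w hz hw => ?_)
              · have hpu : φ u ∈ ncF Λ k' := lieSpan_le_ncF k' (phi_lie φ (k'+1) hu)
                have hpv : φ v ∈ ncF Λ e' := chain_le_ncF he' (phi_chain φ l' hv)
                have hdm : φ m - m ∈ ncF Λ 1 := hφ m
                have t1 : (φ m - m) * (φ u * φ v) ∈ ncF Λ (e + 1) := by
                  have := ncF_mul hdm (ncF_mul hpu hpv)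
                  convert this using 2 <;> omega
                have hdu : φ u - u ∈ ncF Λ (k'+1) := delta_lie φ hφ k' hu
                have t2 : m * ((φ u - u) * φ v) ∈ ncF Λ (e + 1) := by
                  have := ncF_mul (mem_ncF_zero m) (ncF_mul hdu hpv)
                  convert this using 2 <;> omega
                have hmu : m * (u * 1) ∈ ncChain Λ [k'+1] :=
                  Submodule.mul_mem_mul hm (Submodule.mul_mem_mul hu Submodule.mem_top)
                rw [mul_one] at hmu
                have hmu' : m * u ∈ ncF Λ k' := chain_le_ncF (by simp [Nat.add_comm]) hmu
                have hdv : φ v - v ∈ ncF Λ (e' + 1) := ih he' hv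
                have t3 : (m * u) * (φ v - v) ∈ ncF Λ (e + 1) := by
                  have := ncF_mul hmu' hdv
                  convert this using 2 <;> omega
                have key : φ (m * (u * v)) - m * (u * v)
                    = (φ m - m) * (φ u * φ v) + m * ((φ u - u) * φ v)
                      + (m * u) * (φ v - v) := by
                  rw [map_mul, map_mul]
                  noncomm_ring
                rw [key]
                exact add_mem (add_mem t1 t2) t3
              · have h1 : (φ (m * z) - m * z) + (φ (m * w) - m * w)
                    = φ (m * (z + w)) - m * (z + w) := by
                  rw [map_mul, map_mul, map_mul, map_add]
                  noncomm_ring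
                rw [← h1]
                exact add_mem hz hw
            · have h1 : (φ z - z) + (φ w - w) = φ (z + w) - (z + w) := by
                rw [map_add]; noncomm_ring
              rw [← h1]
              exact add_mem hz hw

lemma part1 (hφ : ∀ x : Λ, φ x - x ∈ ncF Λ 1) (d : ℕ) :
    ∀ x ∈ ncF Λ d, φ x - x ∈ ncF Λ (d + 1) := by
  intro x hx
  revert hx
  suffices h : ncF Λ d ≤ Submodule.comap (φ.toLinearMap - LinearMap.id) (ncF Λ (d + 1)) from
    fun hx => by simpa using h hx
  conv_lhs => rw [ncF_eq]
  refine iSup₂_le fun l hl z hz => ?_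
  simp only [Submodule.mem_comap, LinearMap.sub_apply, LinearMap.id_apply,
    AlgHom.toLinearMap_apply]
  exact part1_chain φ hφ l hl hz


end NcFProofAux

open NcFProofAux in
/-- if an algebra endomorphism `φ` of `Λ` induces the identity on the
abelianization `Λ^{ab} = Λ/F¹Λ` (i.e. `φ(x) − x ∈ F¹Λ` for all `x`), then
`φ(x) − x ∈ F^{d+1}Λ` for every `x ∈ F^dΛ` (so the induced map on `gr_F(Λ)` is the
identity), and each induced map `φ^{≤d} : Λ/F^{d+1}Λ → Λ/F^{d+1}Λ` is an isomorphism. -/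
theorem ncF_endo_abelianization_id (Λ : Type*) [Ring Λ] [Algebra ℂ Λ]
    (φ : Λ →ₐ[ℂ] Λ) (hφ : ∀ x : Λ, φ x - x ∈ ncF Λ 1) :
    (∀ d : ℕ, ∀ x ∈ ncF Λ d, φ x - x ∈ ncF Λ (d + 1)) ∧
    (∀ d : ℕ, ∃ h : ncF Λ (d + 1) ≤ (ncF Λ (d + 1)).comap (φ.toLinearMap),
      Function.Bijective ((ncF Λ (d + 1)).mapQ (ncF Λ (d + 1)) φ.toLinearMap h)) := by
  refine ⟨part1 φ hφ, fun d => ?_⟩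
  have hmap : ncF Λ (d+1) ≤ (ncF Λ (d+1)).comap φ.toLinearMap := fun x hx => phi_ncF φ _ hx
  refine ⟨hmap, ?_⟩
  set f := (ncF Λ (d+1)).mapQ (ncF Λ (d+1)) φ.toLinearMap hmap with hf
  set N : Module.End ℂ (Λ ⧸ ncF Λ (d+1)) := f - 1 with hN
  have hstep : ∀ x : Λ, N (Submodule.Quotient.mk x) = Submodule.Quotient.mk (φ x - x) := by
    intro x
    rw [hN, LinearMap.sub_apply, hf, Submodule.mapQ_apply, Module.End.one_apply,
      AlgHom.toLinearMap_apply, ← Submodule.Quotient.mk_sub]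
  have key : ∀ (m j : ℕ), ∀ x ∈ ncF Λ j, ∃ y ∈ ncF Λ (j + m),
      (N ^ m) (Submodule.Quotient.mk x) = Submodule.Quotient.mk y := by
    intro m
    induction m with
    | zero => intro j x hx; exact ⟨x, by simpa using hx, by simp⟩
    | succ m ihm =>
        intro j x hx
        obtain ⟨y, hy, hEq⟩ := ihm (j+1) _ (part1 φ hφ j x hx)
        refine ⟨y, by convert hy using 2 <;> omega, ?_⟩
        rw [pow_succ, Module.End.mul_apply, hstep, hEq]
  have hNnil : N ^ (d+1) = 0 := by
    apply LinearMap.ext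
    intro z
    obtain ⟨x, rfl⟩ := Submodule.Quotient.mk_surjective _ z
    obtain ⟨y, hy, hEq⟩ := key (d+1) 0 x (mem_ncF_zero x)
    rw [LinearMap.zero_apply, hEq, Submodule.Quotient.mk_eq_zero]
    convert hy using 2
    omega
  have hunit : IsUnit f := by
    have h1 : f = 1 + N := by rw [hN]; abel
    rw [h1]
    exact IsNilpotent.isUnit_one_add ⟨d+1, hNnil⟩
  exact (Module.End.isUnit_iff f).mp hunit
end

section
/- Let p : Λ' → Λ be a surjective homomorphism of associative unital ℂ-algebras whose kernel J satisfies J² = 0 and J central in Λ', so that J is a module over Λ^{ab}. Then the map (x, y) ↦ (x, x^{ab} + (y − x)) defines an algebra isomorphism Λ' ×_Λ Λ' ≅ Λ' ×_{Λ^{ab}} (Λ^{ab} ⊕ J), where Λ^{ab} ⊕ J carries the trivial (square-zero) extension multiplication (a₁,m₁)(a₂,m₂) = (a₁a₂, a₁m₂ + m₁a₂). -/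
open Function

/-- for a central extension `p : Λ' ↠ Λ` with kernel `J` (`J² = 0`, `J`
central), and `ab : Λ ↠ C` the abelianization of `Λ` (a commutative quotient whose kernel
is the two-sided ideal generated by commutators), the map `(x, y) ↦ (x, x^{ab}, y − x)`
is an algebra isomorphism from the fiber product `Λ' ×_Λ Λ'` onto the fiber product
`Λ' ×_{Λ^{ab}} (Λ^{ab} ⊕ J)`, where `Λ^{ab} ⊕ J` carries the trivial square-zero
extension multiplication `(a₁,m₁)(a₂,m₂) = (a₁a₂, a₁m₂ + m₁a₂)` (the `Λ^{ab}`-action on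
`J` being computed via lifts to `Λ'`).  We state that the map is a bijection between the
two fiber products which is additive, unital, and multiplicative for these products. -/
theorem central_extension_fiber_product_iso
    (Λ' Λ C : Type*) [Ring Λ'] [Ring Λ] [CommRing C]
    [Algebra ℂ Λ'] [Algebra ℂ Λ] [Algebra ℂ C]
    (p : Λ' →ₐ[ℂ] Λ) (hp : Surjective p)
    (hsq : ∀ x y : Λ', p x = 0 → p y = 0 → x * y = 0)
    (hcen : ∀ x : Λ', p x = 0 → ∀ a : Λ', a * x = x * a)
    (ab : Λ →ₐ[ℂ] C) (hab : Surjective ab)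
    (habker : ∀ z : Λ, ab z = 0 ↔
      z ∈ TwoSidedIdeal.span {w : Λ | ∃ a b : Λ, w = a * b - b * a}) :
    -- the map lands in the second fiber product:
    (∀ x y : Λ', p x = p y → p (y - x) = 0) ∧
    -- bijection between the two fiber products:
    Set.BijOn (fun z : Λ' × Λ' => ((z.1, ab (p z.1), z.2 - z.1) : Λ' × C × Λ'))
      {z : Λ' × Λ' | p z.1 = p z.2}
      {w : Λ' × C × Λ' | w.2.1 = ab (p w.1) ∧ p w.2.2 = 0} ∧
    -- additive:
    (∀ z z' : Λ' × Λ',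
      ((z + z').1, ab (p (z + z').1), (z + z').2 - (z + z').1)
        = (((z.1, ab (p z.1), z.2 - z.1) : Λ' × C × Λ')
            + (z'.1, ab (p z'.1), z'.2 - z'.1))) ∧
    -- unital:
    ((((1 : Λ'), ab (p (1 : Λ')), (1 : Λ') - 1) : Λ' × C × Λ') = (1, 1, 0)) ∧
    -- multiplicative, where the target carries the fiber-product multiplication of `Λ'`
    -- with the trivial square-zero extension `Λ^{ab} ⊕ J`:
    (∀ z z' : Λ' × Λ', p z.1 = p z.2 → p z'.1 = p z'.2 →
      (((z.1 * z'.1, z.2 * z'.2).1, ab (p (z.1 * z'.1)),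
          (z.1 * z'.1, z.2 * z'.2).2 - (z.1 * z'.1, z.2 * z'.2).1) : Λ' × C × Λ')
        = (z.1 * z'.1, ab (p z.1) * ab (p z'.1),
            z.1 * (z'.2 - z'.1) + (z.2 - z.1) * z'.1)) := by
  refine ⟨fun x y h => by simp [h], ⟨?_, ?_, ?_⟩, fun z z' => by simp [Prod.ext_iff]; abel, by simp, ?_⟩
  · rintro ⟨x, y⟩ h
    simp only [Set.mem_setOf_eq] at h ⊢
    simp [h]
  · rintro ⟨x, y⟩ hx ⟨x', y'⟩ hy h
    simp only [Prod.mk.injEq] at h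
    obtain ⟨h1, _, h3⟩ := h
    subst h1
    have : y = y' := sub_left_injective h3
    simp [this]
  · rintro ⟨w1, c, j⟩ ⟨hc, hj⟩
    refine ⟨(w1, w1 + j), ?_, ?_⟩
    · simp only [Set.mem_setOf_eq, map_add, hj, add_zero]
    · simp [show c = ab (p w1) from hc]
  · intro z z' hz hz'
    have key : z.2 * z'.2 - z.1 * z'.1
        = z.1 * (z'.2 - z'.1) + (z.2 - z.1) * z'.1 + (z.2 - z.1) * (z'.2 - z'.1) := by
      noncomm_ring
    have h0 : (z.2 - z.1) * (z'.2 - z'.1) = 0 := by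
      apply hsq <;> simp [hz, hz']
    refine Prod.ext rfl (Prod.ext (by simp) ?_)
    show z.2 * z'.2 - z.1 * z'.1 = _
    rw [key, h0, add_zero]
end
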